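/- arXiv:2310.15453 — 3 statements merged into one kernel-verified Lean document; each statement's English description precedes it below -/
import Mathlib

section
/- For every integer n ≥ 1 and every real number p > 0 with p ≠ 1, one has 1/n + p/(n+p) + ψ(n) − ψ(n+p+1) ≠ 0, where ψ is the digamma function. -/
/-! Write `f(x) = 1/x + p/(x+p) + ψ(x) − ψ(x+p+1)`. The recurrence `ψ(x+1) = ψ(x) + 1/x` gives
`f(x+1) − f(x) = p(p−1)/((x+1)(x+p)(x+p+1))`, whose sign is that of `p − 1`. Log-convexity of `Γ`
squeezes `ψ(x)` between `log(x−1)` and `log x`, so `f(x) → 0` as `x → ∞`. Hence `f(x), f(x+1), …` is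
strictly monotone with limit `0`, and its first term cannot vanish. -/

open Real Set Filter Topology

/-- The digamma function: the logarithmic derivative of the Gamma function. -/
noncomputable def digamma (x : ℝ) : ℝ := deriv Real.Gamma x / Real.Gamma x

theorem StrictMono.lt_of_tendsto {α β : Type*} [TopologicalSpace α] [Preorder α]
    [OrderClosedTopology α] [PartialOrder β] [IsDirectedOrder β] [NoMaxOrder β] {f : β → α} {a : α}
    (hf : StrictMono f) (ha : Tendsto f atTop (𝓝 a)) (b : β) : f b < a := by
  obtain ⟨c, hc⟩ := exists_gt b
  exact (hf hc).trans_le (hf.monotone.ge_of_tendsto ha c)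

theorem StrictAnti.lt_of_tendsto {α β : Type*} [TopologicalSpace α] [Preorder α]
    [OrderClosedTopology α] [PartialOrder β] [IsDirectedOrder β] [NoMaxOrder β] {f : β → α} {a : α}
    (hf : StrictAnti f) (ha : Tendsto f atTop (𝓝 a)) (b : β) : a < f b := by
  obtain ⟨c, hc⟩ := exists_gt b
  exact (hf.antitone.le_of_tendsto ha c).trans_lt (hf hc)

namespace Real

theorem differentiableAt_Gamma_of_pos {x : ℝ} (hx : 0 < x) : DifferentiableAt ℝ Gamma x :=
  differentiableOn_Gamma_Ioi.differentiableAt (Ioi_mem_nhds hx)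

theorem deriv_Gamma_add_one {x : ℝ} (hx : 0 < x) :
    deriv Gamma (x + 1) = Gamma x + x * deriv Gamma x := by
  have hfeq : (fun y => Gamma (y + 1)) =ᶠ[𝓝 x] fun y => y * Gamma y := by
    filter_upwards [Ioi_mem_nhds hx] with y hy using Gamma_add_one (ne_of_gt hy)
  rw [← deriv_comp_add_const, hfeq.deriv_eq,
    deriv_fun_mul differentiableAt_fun_id (differentiableAt_Gamma_of_pos hx), deriv_id'', one_mul]

theorem slope_log_Gamma_add_one {x : ℝ} (hx : 0 < x) :
    slope (log ∘ Gamma) x (x + 1) = log x := by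
  rw [slope_def_field, Function.comp_apply, Function.comp_apply, Gamma_add_one hx.ne',
    log_mul hx.ne' (Gamma_pos_of_pos hx).ne', add_sub_cancel_right, add_sub_cancel_left, div_one]

theorem tendsto_log_add_sub_log_add (a b : ℝ) :
    Tendsto (fun x => log (x + a) - log (x + b)) atTop (𝓝 0) := by
  simpa using (tendsto_log_comp_add_sub_log a).sub (tendsto_log_comp_add_sub_log b)

end Real

theorem digamma_add_one {x : ℝ} (hx : 0 < x) : digamma (x + 1) = digamma x + 1 / x := by
  have hΓ : Gamma x ≠ 0 := (Gamma_pos_of_pos hx).ne'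
  rw [digamma, digamma, deriv_Gamma_add_one hx, Gamma_add_one hx.ne']
  field_simp
  ring

theorem deriv_log_comp_Gamma {x : ℝ} (hx : 0 < x) : deriv (log ∘ Gamma) x = digamma x := by
  rw [Function.comp_def, deriv.log (differentiableAt_Gamma_of_pos hx) (Gamma_pos_of_pos hx).ne',
    digamma]

theorem differentiableAt_log_comp_Gamma {x : ℝ} (hx : 0 < x) :
    DifferentiableAt ℝ (log ∘ Gamma) x :=
  (differentiableAt_Gamma_of_pos hx).log (Gamma_pos_of_pos hx).ne'

theorem digamma_le_log {x : ℝ} (hx : 0 < x) : digamma x ≤ log x := by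
  have hx1 : 0 < x + 1 := by linarith
  simpa only [deriv_log_comp_Gamma hx, slope_log_Gamma_add_one hx] using
    convexOn_log_Gamma.deriv_le_slope hx hx1 (lt_add_one x) (differentiableAt_log_comp_Gamma hx)

theorem log_le_digamma_add_one {x : ℝ} (hx : 0 < x) : log x ≤ digamma (x + 1) := by
  have hx1 : 0 < x + 1 := by linarith
  simpa only [deriv_log_comp_Gamma hx1, slope_log_Gamma_add_one hx] using
    convexOn_log_Gamma.slope_le_deriv hx hx1 (lt_add_one x) (differentiableAt_log_comp_Gamma hx1)

theorem tendsto_digamma_sub_digamma_add (a : ℝ) :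
    Tendsto (fun x => digamma x - digamma (x + a)) atTop (𝓝 0) := by
  have hlow : ∀ᶠ x in atTop, log (x + -1) - log (x + a) ≤ digamma x - digamma (x + a) := by
    filter_upwards [eventually_gt_atTop 1, eventually_gt_atTop (-a)] with x hx hxa
    have := log_le_digamma_add_one (x := x + -1) (by linarith)
    rw [neg_add_cancel_right] at this
    linarith [digamma_le_log (x := x + a) (by linarith)]
  have hup : ∀ᶠ x in atTop, digamma x - digamma (x + a) ≤ log (x + 0) - log (x + (a - 1)) := by
    filter_upwards [eventually_gt_atTop 0, eventually_gt_atTop (1 - a)] with x hx hxa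
    have := log_le_digamma_add_one (x := x + (a - 1)) (by linarith)
    rw [add_assoc, sub_add_cancel] at this
    rw [add_zero]
    linarith [digamma_le_log hx]
  exact tendsto_of_tendsto_of_tendsto_of_le_of_le' (tendsto_log_add_sub_log_add _ _)
    (tendsto_log_add_sub_log_add _ _) hlow hup

noncomputable def digammaCombination (p x : ℝ) : ℝ :=
  1 / x + p / (x + p) + digamma x - digamma (x + p + 1)

theorem digammaCombination_add_one {p x : ℝ} (hp : 0 < p) (hx : 0 < x) :
    digammaCombination p (x + 1) =
      digammaCombination p x + p * (p - 1) / ((x + 1) * (x + p) * (x + p + 1)) := by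
  have hshift : x + 1 + p + 1 = x + p + 1 + 1 := by ring
  rw [digammaCombination, digammaCombination, hshift, digamma_add_one hx,
    digamma_add_one (by linarith : 0 < x + p + 1)]
  field_simp
  ring

theorem tendsto_digammaCombination (p : ℝ) : Tendsto (digammaCombination p) atTop (𝓝 0) := by
  have hrecip : Tendsto (fun x : ℝ => 1 / x) atTop (𝓝 0) := by
    simpa only [one_div] using tendsto_inv_atTop_zero
  have hfrac : Tendsto (fun x : ℝ => p / (x + p)) atTop (𝓝 0) :=
    tendsto_const_nhds.div_atTop (tendsto_atTop_add_const_right _ p tendsto_id)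
  have hsum := (hrecip.add hfrac).add (tendsto_digamma_sub_digamma_add (p + 1))
  rw [add_zero, add_zero] at hsum
  exact hsum.congr fun x => by rw [digammaCombination, ← add_assoc, add_sub_assoc]

theorem digammaCombination_ne_zero {p x : ℝ} (hp : 0 < p) (hp1 : p ≠ 1) (hx : 0 < x) :
    digammaCombination p x ≠ 0 := by
  set u : ℕ → ℝ := fun N => digammaCombination p (x + N)
  have hu : Tendsto u atTop (𝓝 0) := (tendsto_digammaCombination p).comp
    (tendsto_atTop_add_const_left _ x tendsto_natCast_atTop_atTop)
  have hstep : ∀ N : ℕ, u (N + 1) = u N + p * (p - 1) /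
      ((x + N + 1) * (x + N + p) * (x + N + p + 1)) := fun N => by
    simp only [u, Nat.cast_succ, ← add_assoc]
    exact digammaCombination_add_one hp (by positivity)
  have hden : ∀ N : ℕ, 0 < (x + N + 1) * (x + N + p) * (x + N + p + 1) := fun N => by positivity
  have hu0 : u 0 = digammaCombination p x := by simp [u]
  rcases hp1.lt_or_gt with hlt | hgt
  · have hanti : StrictAnti u := strictAnti_nat_of_succ_lt fun N => by
      rw [hstep]
      have : p * (p - 1) < 0 := mul_neg_of_pos_of_neg hp (by linarith)
      linarith [div_neg_of_neg_of_pos this (hden N)]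
    exact hu0 ▸ (hanti.lt_of_tendsto hu 0).ne'
  · have hmono : StrictMono u := strictMono_nat_of_lt_succ fun N => by
      rw [hstep]
      have : 0 < p * (p - 1) := mul_pos hp (by linarith)
      linarith [div_pos this (hden N)]
    exact hu0 ▸ (hmono.lt_of_tendsto hu 0).ne

/-- For every integer `n ≥ 1` and every real `p > 0` with `p ≠ 1`, one has
`1/n + p/(n+p) + ψ(n) − ψ(n+p+1) ≠ 0`. -/
theorem digamma_combination_ne_zero (n : ℕ) (hn : 1 ≤ n) (p : ℝ) (hp : 0 < p)
    (hp1 : p ≠ 1) :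
    1 / (n : ℝ) + p / ((n : ℝ) + p) + digamma n - digamma ((n : ℝ) + p + 1) ≠ 0 :=
  digammaCombination_ne_zero hp hp1 (by exact_mod_cast hn)
end

section
/- Fix an integer n ≥ 1 and a real number p > 0, and define F : (0,∞) × (0,∞) → ℝ by F(a,b) = (b/a)^{(np+n)/(n+p)} · ((b+1)/(a+1))^{p/(n+p)} · B(p+1, (b+1)n/a) − B(p+1, (a+1)n/a)^{p/(n+p)} · B(p+1, (b+1)n/b)^{n/(n+p)}. Then the partial derivative of F with respect to b at the point (1,1) equals ((2n² + np)·B(p+1, 2n)/(n+p)) · [1/(2n) + p/(2n+p) + ψ(2n) − ψ(2n+p+1)]. -/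
/-- The Beta function `B(x,y) = ∫₀¹ t^(x-1) (1-t)^(y-1) dt`. -/
noncomputable def Beta (x y : ℝ) : ℝ := ∫ t in (0:ℝ)..1, t ^ (x - 1) * (1 - t) ^ (y - 1)

/-!
Near `b = 1` both terms of `F(1, b)` are products of powers of smooth positive functions, and
both equal `B := B(p+1, 2n)` at `b = 1`, so the derivative is `B` times the difference of their
logarithmic derivatives. The Beta factors contribute through `∂_y log B(x, y) = ψ(y) − ψ(x+y)`,
which follows from `B(x, y) = Γ(x)Γ(y)/Γ(x+y)`, and the constant factor `B^{p/(n+p)}` of the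
second term combines with `B^{n/(n+p)}` into `B`.
-/

open Topology

lemma Beta_eq_Gamma_mul_Gamma_div_Gamma {x y : ℝ} (hx : 0 < x) (hy : 0 < y) :
    Beta x y = Real.Gamma x * Real.Gamma y / Real.Gamma (x + y) := by
  have hcomplex := Complex.Gamma_mul_Gamma_eq_betaIntegral (s := x) (t := y) (by simpa) (by simpa)
  have hofReal : Complex.betaIntegral x y = (Beta x y : ℂ) := by
    rw [Complex.betaIntegral, Beta, ← intervalIntegral.integral_ofReal]
    refine intervalIntegral.integral_congr fun t ht => ?_
    rw [Set.uIcc_of_le zero_le_one] at ht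
    push_cast
    rw [← Complex.ofReal_one, ← Complex.ofReal_sub, Complex.ofReal_cpow ht.1,
      Complex.ofReal_cpow (sub_nonneg.mpr ht.2)]
    push_cast
    ring_nf
  rw [hofReal, ← Complex.ofReal_add] at hcomplex
  simp only [Complex.Gamma_ofReal] at hcomplex
  norm_cast at hcomplex
  rw [hcomplex, mul_div_cancel_left₀ _ (Real.Gamma_pos_of_pos (add_pos hx hy)).ne']

lemma Beta_pos {x y : ℝ} (hx : 0 < x) (hy : 0 < y) : 0 < Beta x y := by
  rw [Beta_eq_Gamma_mul_Gamma_div_Gamma hx hy]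
  exact div_pos (mul_pos (Real.Gamma_pos_of_pos hx) (Real.Gamma_pos_of_pos hy))
    (Real.Gamma_pos_of_pos (add_pos hx hy))

lemma Real.hasDerivAt_Gamma_of_pos {y : ℝ} (hy : 0 < y) :
    HasDerivAt Real.Gamma (deriv Real.Gamma y) y :=
  (Real.differentiableAt_Gamma fun m hm => by linarith [(Nat.cast_nonneg m : (0:ℝ) ≤ m)]).hasDerivAt

lemma hasDerivAt_Beta_right {x y : ℝ} (hx : 0 < x) (hy : 0 < y) :
    HasDerivAt (Beta x) (Beta x y * (digamma y - digamma (x + y))) y := by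
  have hGxy := Real.Gamma_pos_of_pos (add_pos hx hy)
  have hnum := (Real.hasDerivAt_Gamma_of_pos hy).const_mul (Real.Gamma x)
  have hden : HasDerivAt (fun z => Real.Gamma (x + z)) (deriv Real.Gamma (x + y)) y := by
    simpa [Function.comp_def] using
      (Real.hasDerivAt_Gamma_of_pos (add_pos hx hy)).comp y ((hasDerivAt_id y).const_add x)
  have hBeta : Beta x =ᶠ[𝓝 y] fun z => Real.Gamma x * Real.Gamma z / Real.Gamma (x + z) := by
    filter_upwards [eventually_gt_nhds hy] with z hz using Beta_eq_Gamma_mul_Gamma_div_Gamma hx hz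
  refine (hnum.div hden hGxy.ne').congr_of_eventuallyEq hBeta |>.congr_deriv ?_
  rw [Beta_eq_Gamma_mul_Gamma_div_Gamma hx hy, digamma, digamma]
  field_simp

lemma HasDerivAt.const_Beta {x y : ℝ} (hx : 0 < x) (hy : 0 < y) {f : ℝ → ℝ} {f' b : ℝ}
    (hf : HasDerivAt f f' b) (hfb : f b = y) :
    HasDerivAt (fun t => Beta x (f t)) (Beta x y * (digamma y - digamma (x + y)) * f') b := by
  subst hfb
  exact (hasDerivAt_Beta_right hx hy).comp b hf

lemma hasDerivAt_rpow_mul_rpow_mul_Beta_at_one {x c : ℝ} (hx : 0 < x) (hc : 0 < c) (α β : ℝ) :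
    HasDerivAt (fun b => b ^ α * ((b + 1) / 2) ^ β * Beta x ((b + 1) * c))
      (Beta x (2 * c) * (α + β / 2 + c * (digamma (2 * c) - digamma (x + 2 * c)))) 1 := by
  have hpow1 : HasDerivAt (fun b : ℝ => b ^ α) α 1 := by
    simpa using (hasDerivAt_id' (1 : ℝ)).rpow_const (p := α) (Or.inl one_ne_zero)
  have hhalf : HasDerivAt (fun b : ℝ => (b + 1) / 2) (1 / 2) 1 :=
    ((hasDerivAt_id' 1).add_const 1).div_const 2
  have hpow2 : HasDerivAt (fun b : ℝ => ((b + 1) / 2) ^ β) (β / 2) 1 := by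
    convert hhalf.rpow_const (p := β) (Or.inl (by norm_num)) using 1
    norm_num
    ring
  have hlin : HasDerivAt (fun b : ℝ => (b + 1) * c) c 1 := by
    simpa using ((hasDerivAt_id' (1 : ℝ)).add_const 1).mul_const c
  have hBeta := hlin.const_Beta hx (y := 2 * c) (by positivity) (by ring)
  exact ((hpow1.mul hpow2).mul hBeta).congr_deriv (by norm_num; ring)

lemma hasDerivAt_Beta_div_rpow_at_one {x c : ℝ} (hx : 0 < x) (hc : 0 < c) (γ : ℝ) :
    HasDerivAt (fun b => Beta x ((b + 1) * c / b) ^ γ)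
      (Beta x (2 * c) ^ γ * (-γ * c * (digamma (2 * c) - digamma (x + 2 * c)))) 1 := by
  have hquot : HasDerivAt (fun b : ℝ => (b + 1) * c / b) (-c) 1 := by
    have hlin : HasDerivAt (fun b : ℝ => (b + 1) * c) c 1 := by
      simpa using ((hasDerivAt_id' (1 : ℝ)).add_const 1).mul_const c
    exact (hlin.div (hasDerivAt_id' 1) one_ne_zero).congr_deriv (by ring)
  have hB := Beta_pos hx (by positivity : 0 < 2 * c)
  convert (hquot.const_Beta hx (y := 2 * c) (by positivity) (by ring)).rpow_const (p := γ)
    (Or.inl (by norm_num; exact hB.ne')) using 1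
  rw [show (1 + 1) * c / 1 = 2 * c by ring, Real.rpow_sub_one hB.ne']
  field_simp

/-- For `n ≥ 1`, `p > 0` and `F(a,b) = (b/a)^{(np+n)/(n+p)}·((b+1)/(a+1))^{p/(n+p)}·
B(p+1,(b+1)n/a) − B(p+1,(a+1)n/a)^{p/(n+p)}·B(p+1,(b+1)n/b)^{n/(n+p)}`, the partial
derivative of `F` with respect to `b` at `(1,1)` equals
`((2n²+np)·B(p+1,2n)/(n+p))·[1/(2n) + p/(2n+p) + ψ(2n) − ψ(2n+p+1)]`. -/
theorem partial_deriv_F_at_one_one (n : ℕ) (hn : 1 ≤ n) (p : ℝ) (hp : 0 < p)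
    (F : ℝ → ℝ → ℝ)
    (hF : ∀ a b : ℝ, 0 < a → 0 < b →
      F a b = (b / a) ^ (((n : ℝ) * p + n) / ((n : ℝ) + p)) *
          ((b + 1) / (a + 1)) ^ (p / ((n : ℝ) + p)) * Beta (p + 1) ((b + 1) * n / a) -
        Beta (p + 1) ((a + 1) * n / a) ^ (p / ((n : ℝ) + p)) *
          Beta (p + 1) ((b + 1) * n / b) ^ ((n : ℝ) / ((n : ℝ) + p))) :
    HasDerivAt (fun b => F 1 b)
      ((2 * (n : ℝ) ^ 2 + n * p) * Beta (p + 1) (2 * n) / ((n : ℝ) + p) *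
        (1 / (2 * (n : ℝ)) + p / (2 * (n : ℝ) + p) +
          digamma (2 * n) - digamma (2 * (n : ℝ) + p + 1))) 1 := by
  have hn' : (0 : ℝ) < n := by exact_mod_cast hn
  have hp1 : 0 < p + 1 := by linarith
  set β := p / ((n : ℝ) + p)
  set γ := (n : ℝ) / ((n : ℝ) + p)
  set B := Beta (p + 1) (2 * n)
  have hF1 : (fun b => F 1 b) =ᶠ[𝓝 1] fun b =>
      b ^ (((n : ℝ) * p + n) / ((n : ℝ) + p)) * ((b + 1) / 2) ^ β * Beta (p + 1) ((b + 1) * n) -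
        B ^ β * Beta (p + 1) ((b + 1) * n / b) ^ γ := by
    filter_upwards [eventually_gt_nhds one_pos] with b hb
    rw [hF 1 b one_pos hb]
    norm_num [B]
  have hβγ : β + γ = 1 := by
    rw [← add_div, add_comm p, div_self (by positivity)]
  have hBpow : B ^ β * B ^ γ = B := by
    rw [← Real.rpow_add (Beta_pos hp1 (by positivity)), hβγ, Real.rpow_one]
  refine ((hasDerivAt_rpow_mul_rpow_mul_Beta_at_one hp1 hn' _ _).sub
    ((hasDerivAt_Beta_div_rpow_at_one hp1 hn' γ).const_mul (B ^ β))).congr_of_eventuallyEq hF1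
    |>.congr_deriv ?_
  rw [← mul_assoc, hBpow, show 2 * (n : ℝ) + p + 1 = p + 1 + 2 * n by ring]
  simp only [β, γ]
  field_simp
  ring
end

section
/- Let X be a nonempty set, n ≥ 1 an integer, p > 0 and A ≥ 1 real numbers. Let F : X^{n+1} → [0,∞) be a function that is invariant under all permutations of its last n arguments and satisfies F(x₀, x₁, x₂, …, xₙ) ≤ A · F(x₀, x₀, x₂, …, xₙ)^{p/(p+1)} · F(x₁, x₁, x₂, …, xₙ)^{1/(p+1)} for all x₀, …, xₙ ∈ X. Then for all x₀, …, xₙ ∈ X one has F(x₀, x₁, …, xₙ) ≤ A^{α(p,n)} · F(x₀, x₀, …, x₀)^{p/(n+p)} · ∏_{j=1}^{n} F(x_j, x_j, …, x_j)^{1/(n+p)}, where α(p,n) = (p+2)·((p+1)/p)^{n−1} − (p+1). -/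
/-!
Write `G(a; u) = F(a; a, u)` for the function obtained by identifying the first two arguments.
Applying the two-point bound twice, with a transposition of the last arguments in between, gives
`T ≤ C · T^{1/(p+1)²}` for `T = G(a; b, …)`, and solving for `T` shows that `G` satisfies the
two-point bound with `p + 1` and `A^{(p+1)/p}` in place of `p` and `A`. Induction on `n` then
gives the Hölder bound with constant `A^{n + n(n-1)/(2p)}`, and
`n + n(n-1)/(2p) ≤ (p+2)((p+1)/p)^{n-1} - (p+1)` is a truncated binomial expansion.
-/

open Function Equiv Real

theorem Fin.cons_comp_swap_zero_one {X : Type*} {n : ℕ} (a : X) (u : Fin (n + 1) → X) :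
    (Fin.cons a u : Fin (n + 2) → X) ∘ swap 0 1 = Fin.cons (u 0) (update u 0 a) := by
  funext i
  refine Fin.cases ?_ (fun j => Fin.cases ?_ (fun k => ?_) j) i
  · simp
  · simp
  · rw [comp_apply, swap_apply_of_ne_of_ne (Fin.succ_ne_zero _) (Fin.succ_succ_ne_one k)]
    simp

theorem Fin.cons_comp_decomposeFin_symm_zero {X : Type*} {n : ℕ} (a : X) (u : Fin n → X)
    (σ : Perm (Fin n)) :
    (Fin.cons a u : Fin (n + 1) → X) ∘ Perm.decomposeFin.symm (0, σ) = Fin.cons a (u ∘ σ) := by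
  funext i
  refine Fin.cases ?_ (fun j => ?_) i <;> simp

theorem Fin.cons_self_const {X : Type*} {n : ℕ} (a : X) :
    (Fin.cons a (fun _ => a) : Fin (n + 1) → X) = fun _ => a := by
  funext i
  refine Fin.cases ?_ (fun j => ?_) i <;> simp

namespace Real

theorem le_rpow_inv_one_sub_of_le_mul_rpow {T C s : ℝ} (hT : 0 ≤ T) (hC : 0 ≤ C) (hs : s < 1)
    (h : T ≤ C * T ^ s) : T ≤ C ^ (1 - s)⁻¹ := by
  rcases hT.eq_or_lt with rfl | hT
  · positivity
  have hs' : 0 < 1 - s := sub_pos.mpr hs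
  have h' : T ^ (1 - s) ≤ C := by
    rw [rpow_sub hT, rpow_one, div_le_iff₀ (rpow_pos_of_pos hT s)]
    exact h
  calc T = (T ^ (1 - s)) ^ (1 - s)⁻¹ := by
        rw [← rpow_mul hT.le, mul_inv_cancel₀ hs'.ne', rpow_one]
    _ ≤ C ^ (1 - s)⁻¹ := rpow_le_rpow (by positivity) h' (inv_nonneg.mpr hs'.le)

theorem le_of_le_mul_rpow_of_le_mul_rpow {p A T S X Z : ℝ} (hp : 0 < p) (hA : 0 < A)
    (hT : 0 ≤ T) (hS : 0 ≤ S) (hX : 0 ≤ X) (hZ : 0 ≤ Z)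
    (hTS : T ≤ A * X ^ (p / (p + 1)) * S ^ (1 / (p + 1)))
    (hST : S ≤ A * Z ^ (p / (p + 1)) * T ^ (1 / (p + 1))) :
    T ≤ A ^ ((p + 1) / p) * X ^ ((p + 1) / (p + 1 + 1)) * Z ^ (1 / (p + 1 + 1)) := by
  set q := p / (p + 1)
  set r := 1 / (p + 1)
  have hr : r * r < 1 := by
    have : r < 1 := by rw [div_lt_one (by positivity)]; linarith
    nlinarith [show 0 < r by positivity]
  have hself : T ≤ (A ^ (1 + r) * X ^ q * Z ^ (q * r)) * T ^ (r * r) :=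
    calc T ≤ A * X ^ q * (A * Z ^ q * T ^ r) ^ r := hTS.trans (by gcongr)
      _ = (A ^ (1 + r) * X ^ q * Z ^ (q * r)) * T ^ (r * r) := by
        rw [mul_rpow (by positivity) (by positivity), mul_rpow hA.le (by positivity),
          ← rpow_mul hZ, ← rpow_mul hT, rpow_add hA, rpow_one]
        ring
  have h_one_sub : 1 - r * r = p * (p + 2) / (p + 1) ^ 2 := by
    simp only [r]; field_simp; ring
  have hA_exp : (1 + r) * (1 - r * r)⁻¹ = (p + 1) / p := by
    rw [h_one_sub]; simp only [r]; field_simp; ring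
  have hX_exp : q * (1 - r * r)⁻¹ = (p + 1) / (p + 1 + 1) := by
    rw [h_one_sub]; simp only [q]; field_simp; ring
  have hZ_exp : q * r * (1 - r * r)⁻¹ = 1 / (p + 1 + 1) := by
    rw [h_one_sub]; simp only [q, r]; field_simp; ring
  refine (le_rpow_inv_one_sub_of_le_mul_rpow hT (by positivity) hr hself).trans_eq ?_
  rw [mul_rpow (by positivity) (by positivity), mul_rpow (by positivity) (by positivity),
    ← rpow_mul hA.le, ← rpow_mul hX, ← rpow_mul hZ, hA_exp, hX_exp, hZ_exp]

theorem mul_rpow_mul_mul_rpow_mul_of_add_eq_one {B D₀ D₁ P g q r : ℝ} (hB : 0 ≤ B)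
    (hD₀ : 0 ≤ D₀) (hD₁ : 0 ≤ D₁) (hP : 0 ≤ P) (hqr : q + r = 1) :
    (B * D₀ ^ g * P) ^ q * (B * D₁ ^ g * P) ^ r = B * D₀ ^ (g * q) * D₁ ^ (g * r) * P := by
  have hsplit {y : ℝ} (hy : 0 ≤ y) : y ^ q * y ^ r = y := by
    rw [← rpow_add' hy (by rw [hqr]; exact one_ne_zero), hqr, rpow_one]
  simp only [mul_rpow (mul_nonneg hB (rpow_nonneg hD₀ g)) hP,
    mul_rpow (mul_nonneg hB (rpow_nonneg hD₁ g)) hP, mul_rpow hB (rpow_nonneg hD₀ g),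
    mul_rpow hB (rpow_nonneg hD₁ g), ← rpow_mul hD₀, ← rpow_mul hD₁]
  calc B ^ q * D₀ ^ (g * q) * P ^ q * (B ^ r * D₁ ^ (g * r) * P ^ r)
      = (B ^ q * B ^ r) * D₀ ^ (g * q) * D₁ ^ (g * r) * (P ^ q * P ^ r) := by ring
    _ = B * D₀ ^ (g * q) * D₁ ^ (g * r) * P := by rw [hsplit hB, hsplit hP]

end Real

namespace Persson

noncomputable def exponent (n : ℕ) (p : ℝ) : ℝ := n + n * (n - 1) / (2 * p)

theorem one_add_mul_exponent_add_one {p : ℝ} (hp : 0 < p) (n : ℕ) :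
    1 + (p + 1) / p * exponent n (p + 1) = exponent (n + 1) p := by
  simp only [exponent]
  push_cast
  field_simp
  ring

theorem exponent_add_one_le {p : ℝ} (hp : 0 < p) (n : ℕ) :
    exponent (n + 1) p ≤ (p + 2) * ((p + 1) / p) ^ n - (p + 1) := by
  rw [le_sub_iff_add_le]
  induction n with
  | zero => norm_num [exponent]; linarith
  | succ n ih =>
    have hstep : (p + 1) / p * (exponent (n + 1) p + (p + 1)) - (exponent (n + 1 + 1) p + (p + 1))
        = (2 * p + n ^ 2 + n) / (2 * p ^ 2) := by
      simp only [exponent]; push_cast; field_simp; ring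
    calc exponent (n + 1 + 1) p + (p + 1)
        ≤ (p + 1) / p * (exponent (n + 1) p + (p + 1)) := by
          rw [← sub_nonneg, hstep]
          positivity
      _ ≤ (p + 1) / p * ((p + 2) * ((p + 1) / p) ^ n) := by gcongr
      _ = (p + 2) * ((p + 1) / p) ^ (n + 1) := by ring

variable {X : Type*}

def TailSymmetric {n : ℕ} (F : X → (Fin n → X) → ℝ) : Prop :=
  ∀ (x₀ : X) (x : Fin n → X) (σ : Perm (Fin n)), F x₀ (x ∘ σ) = F x₀ x

def TwoPointBound {n : ℕ} (A p : ℝ) (F : X → (Fin (n + 1) → X) → ℝ) : Prop :=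
  ∀ (x₀ : X) (x : Fin (n + 1) → X),
    F x₀ x ≤ A * F x₀ (update x 0 x₀) ^ (p / (p + 1)) * F (x 0) x ^ (1 / (p + 1))

def HolderBound {n : ℕ} (C p : ℝ) (F : X → (Fin n → X) → ℝ) : Prop :=
  ∀ (x₀ : X) (x : Fin n → X),
    F x₀ x ≤ C * F x₀ (fun _ => x₀) ^ (p / (n + p)) * ∏ j, F (x j) (fun _ => x j) ^ (1 / (n + p))

def identifyFirstTwo {n : ℕ} (F : X → (Fin (n + 1) → X) → ℝ) (a : X) (u : Fin n → X) : ℝ :=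
  F a (Fin.cons a u)

theorem identifyFirstTwo_self_const {n : ℕ} (F : X → (Fin (n + 1) → X) → ℝ) (a : X) :
    identifyFirstTwo F a (fun _ => a) = F a (fun _ => a) := by
  rw [identifyFirstTwo, Fin.cons_self_const]

theorem identifyFirstTwo_tail {n : ℕ} (F : X → (Fin (n + 2) → X) → ℝ) (c : X)
    (x : Fin (n + 2) → X) : identifyFirstTwo F c (Fin.tail x) = F c (update x 0 c) := by
  rw [identifyFirstTwo, ← Fin.update_cons_zero (x 0), Fin.cons_self_tail]

theorem identifyFirstTwo_apply_zero_tail {n : ℕ} (F : X → (Fin (n + 2) → X) → ℝ)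
    (x : Fin (n + 2) → X) : identifyFirstTwo F (x 0) (Fin.tail x) = F (x 0) x := by
  rw [identifyFirstTwo, Fin.cons_self_tail]

theorem TailSymmetric.identifyFirstTwo {n : ℕ} {F : X → (Fin (n + 1) → X) → ℝ}
    (hF : TailSymmetric F) : TailSymmetric (identifyFirstTwo F) := by
  intro a u σ
  simp only [Persson.identifyFirstTwo]
  rw [← Fin.cons_comp_decomposeFin_symm_zero, hF]

theorem TwoPointBound.identifyFirstTwo {n : ℕ} {p A : ℝ} (hp : 0 < p) (hA : 0 < A)
    {F : X → (Fin (n + 2) → X) → ℝ} (hF0 : ∀ x₀ x, 0 ≤ F x₀ x) (hsym : TailSymmetric F)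
    (hF : TwoPointBound A p F) :
    TwoPointBound (A ^ ((p + 1) / p)) (p + 1) (identifyFirstTwo F) := by
  intro a u
  have hswap (c : X) : F c (Fin.cons (u 0) (update u 0 a)) = F c (Fin.cons a u) := by
    rw [← Fin.cons_comp_swap_zero_one, hsym]
  have h₁ := hF a (Fin.cons (u 0) (update u 0 a))
  have h₂ := hF (u 0) (Fin.cons a u)
  rw [Fin.update_cons_zero, Fin.cons_zero, hswap] at h₁
  rw [Fin.update_cons_zero, Fin.cons_zero, ← hswap] at h₂
  exact le_of_le_mul_rpow_of_le_mul_rpow hp hA (hF0 _ _) (hF0 _ _) (hF0 _ _) (hF0 _ _) h₁ h₂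

theorem HolderBound.of_identifyFirstTwo {n : ℕ} {p A C : ℝ} (hp : 0 < p) (hA : 0 < A)
    (hC : 0 ≤ C) {F : X → (Fin (n + 2) → X) → ℝ} (hF0 : ∀ x₀ x, 0 ≤ F x₀ x)
    (hF : TwoPointBound A p F)
    (hG : HolderBound C (p + 1) (identifyFirstTwo F)) : HolderBound (A * C) p F := by
  intro x₀ x
  have hcast : ((n + 1 : ℕ) : ℝ) + (p + 1) = ((n + 2 : ℕ) : ℝ) + p := by push_cast; ring
  set g := (p + 1) / ((n + 2 : ℕ) + p)
  set P := ∏ j : Fin (n + 1), F (x j.succ) (fun _ => x j.succ) ^ (1 / ((n + 2 : ℕ) + p))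
  have hG' (c : X) : identifyFirstTwo F c (Fin.tail x) ≤ C * F c (fun _ => c) ^ g * P := by
    simpa only [identifyFirstTwo_self_const, Fin.tail, hcast] using hG c (Fin.tail x)
  have hG'_nonneg (c : X) : 0 ≤ C * F c (fun _ => c) ^ g * P := (hF0 _ _).trans (hG' c)
  have hgq : g * (p / (p + 1)) = p / ((n + 2 : ℕ) + p) := by
    simp only [g]; field_simp
  have hgr : g * (1 / (p + 1)) = 1 / ((n + 2 : ℕ) + p) := by
    simp only [g]; field_simp
  calc F x₀ x ≤ A * identifyFirstTwo F x₀ (Fin.tail x) ^ (p / (p + 1)) *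
        identifyFirstTwo F (x 0) (Fin.tail x) ^ (1 / (p + 1)) := by
        rw [identifyFirstTwo_tail, identifyFirstTwo_apply_zero_tail]
        exact hF x₀ x
    _ ≤ A * (C * F x₀ (fun _ => x₀) ^ g * P) ^ (p / (p + 1)) *
          (C * F (x 0) (fun _ => x 0) ^ g * P) ^ (1 / (p + 1)) := by
        have hq := rpow_le_rpow (hF0 _ _) (hG' x₀) (by positivity : 0 ≤ p / (p + 1))
        have hr := rpow_le_rpow (hF0 _ _) (hG' (x 0)) (by positivity : 0 ≤ 1 / (p + 1))
        exact mul_le_mul (mul_le_mul_of_nonneg_left hq hA.le) hr (rpow_nonneg (hF0 _ _) _)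
          (mul_nonneg hA.le (rpow_nonneg (hG'_nonneg _) _))
    _ = A * C * F x₀ (fun _ => x₀) ^ (g * (p / (p + 1))) *
          F (x 0) (fun _ => x 0) ^ (g * (1 / (p + 1))) * P := by
        rw [mul_assoc A, mul_rpow_mul_mul_rpow_mul_of_add_eq_one hC (hF0 _ _) (hF0 _ _)
          (Finset.prod_nonneg fun _ _ => rpow_nonneg (hF0 _ _) _) (by field_simp)]
        ring
    _ = _ := by
        rw [hgq, hgr, Fin.prod_univ_succ (n := n + 1)]
        ring

theorem holderBound_of_twoPointBound (n : ℕ) {p A : ℝ} (hp : 0 < p) (hA : 0 < A)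
    {F : X → (Fin (n + 1) → X) → ℝ} (hF0 : ∀ x₀ x, 0 ≤ F x₀ x) (hsym : TailSymmetric F)
    (hF : TwoPointBound A p F) : HolderBound (A ^ exponent (n + 1) p) p F := by
  induction n generalizing p A with
  | zero =>
    intro x₀ x
    have hconst (y : Fin 1 → X) : y = fun _ => y 0 :=
      funext fun i => by rw [Fin.fin_one_eq_zero i]
    obtain ⟨a, rfl⟩ : ∃ a, x = fun _ => a := ⟨x 0, hconst x⟩
    have h := hF x₀ fun _ => a
    rw [hconst (update _ 0 x₀), update_self] at h
    simpa [exponent, add_comm p] using h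
  | succ n ih =>
    have hG := ih (p := p + 1) (A := A ^ ((p + 1) / p)) (by positivity) (by positivity)
      (fun _ _ => hF0 _ _) hsym.identifyFirstTwo (hF.identifyFirstTwo hp hA hF0 hsym)
    have hC : A * (A ^ ((p + 1) / p)) ^ exponent (n + 1) (p + 1) =
        A ^ exponent (n + 1 + 1) p := by
      rw [← rpow_mul hA.le, ← one_add_mul_exponent_add_one hp, rpow_add hA, rpow_one]
    exact hC ▸ HolderBound.of_identifyFirstTwo hp hA (by positivity) hF0 hF hG

end Persson

open Persson

theorem persson_holder_principle_general {X : Type*} (n : ℕ) (hn : 0 < n)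
    (p A : ℝ) (hp : 0 < p) (hA : 1 ≤ A)
    (F : X → (Fin n → X) → ℝ)
    (hF0 : ∀ (x₀ : X) (x : Fin n → X), 0 ≤ F x₀ x)
    (hsym : ∀ (x₀ : X) (x : Fin n → X) (σ : Equiv.Perm (Fin n)), F x₀ (x ∘ σ) = F x₀ x)
    (hrec : ∀ (x₀ : X) (x : Fin n → X),
      F x₀ x ≤ A * (F x₀ (Function.update x ⟨0, hn⟩ x₀)) ^ (p / (p + 1)) *
        (F (x ⟨0, hn⟩) x) ^ (1 / (p + 1))) :
    ∀ (x₀ : X) (x : Fin n → X),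
      F x₀ x ≤ A ^ ((p + 2) * ((p + 1) / p) ^ (n - 1) - (p + 1)) *
        (F x₀ (fun _ => x₀)) ^ (p / ((n : ℝ) + p)) *
        ∏ j : Fin n, (F (x j) (fun _ => x j)) ^ (1 / ((n : ℝ) + p)) := by
  intro x₀ x
  obtain ⟨m, rfl⟩ : ∃ m, n = m + 1 := ⟨n - 1, by omega⟩
  -- `hrec` is a `TwoPointBound`, since `⟨0, hn⟩` and `0 : Fin (m + 1)` agree definitionally.
  have hbound := holderBound_of_twoPointBound m hp (by positivity) hF0 hsym hrec x₀ x
  have hexp := exponent_add_one_le hp m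
  have hD := rpow_nonneg (hF0 x₀ fun _ => x₀) (p / ((m + 1 : ℕ) + p))
  have hP := Finset.prod_nonneg fun j (_ : j ∈ Finset.univ) =>
    rpow_nonneg (hF0 (x j) fun _ => x j) (1 / ((m + 1 : ℕ) + p))
  rw [Nat.add_sub_cancel]
  exact hbound.trans (mul_le_mul_of_nonneg_right
    (mul_le_mul_of_nonneg_right (rpow_le_rpow_of_exponent_le hA hexp) hD) hP)

/-- Persson's Hölder-type combination principle: if `F : X^{n+1} → [0,∞)`
(encoded as `F : X → (Fin n → X) → ℝ` with `F x₀ x` standing for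
`F(x₀, x 0, …, x (n-1))`) is invariant under permutations of its last `n`
arguments and satisfies
`F(x₀,x₁,x₂,…,xₙ) ≤ A·F(x₀,x₀,x₂,…,xₙ)^{p/(p+1)}·F(x₁,x₁,x₂,…,xₙ)^{1/(p+1)}`,
then `F(x₀,…,xₙ) ≤ A^{α(p,n)}·F(x₀,…,x₀)^{p/(n+p)}·∏ⱼ F(xⱼ,…,xⱼ)^{1/(n+p)}`
with `α(p,n) = (p+2)((p+1)/p)^{n−1} − (p+1)`. -/
theorem persson_holder_principle {X : Type*} [Nonempty X] (n : ℕ) (hn : 0 < n)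
    (p A : ℝ) (hp : 0 < p) (hA : 1 ≤ A)
    (F : X → (Fin n → X) → ℝ)
    (hF0 : ∀ (x₀ : X) (x : Fin n → X), 0 ≤ F x₀ x)
    (hsym : ∀ (x₀ : X) (x : Fin n → X) (σ : Equiv.Perm (Fin n)), F x₀ (x ∘ σ) = F x₀ x)
    (hrec : ∀ (x₀ : X) (x : Fin n → X),
      F x₀ x ≤ A * (F x₀ (Function.update x ⟨0, hn⟩ x₀)) ^ (p / (p + 1)) *
        (F (x ⟨0, hn⟩) x) ^ (1 / (p + 1))) :
    ∀ (x₀ : X) (x : Fin n → X),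
      F x₀ x ≤ A ^ ((p + 2) * ((p + 1) / p) ^ (n - 1) - (p + 1)) *
        (F x₀ (fun _ => x₀)) ^ (p / ((n : ℝ) + p)) *
        ∏ j : Fin n, (F (x j) (fun _ => x j)) ^ (1 / ((n : ℝ) + p)) :=
  persson_holder_principle_general n hn p A hp hA F hF0 hsym hrec
end
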